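/- Fix an even integer n = 2a with a ≥ 1. The common Pareto set of the bi-party problem BPAOAZ(x) = (AORZ(x), AOFZ(x)), i.e., the intersection of the Pareto set of AORZ and the Pareto set of AOFZ over x ∈ {0,1}^n, is exactly the singleton {1^n} (the all-ones string), and this unique common Pareto-optimal solution satisfies AORZ(1^n) = AOFZ(1^n) = (n/2, n/2). -/
import Mathlib


/-- Number of ones in the second half of `x` (indices `a ≤ i < 2a`). -/
def f11 (a : ℕ) (x : Fin (2 * a) → Bool) : ℕ :=
  ∑ i : Fin (2 * a), if a ≤ (i : ℕ) ∧ x i = true then 1 else 0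

/-- Ones in the first half plus zeros in the second half. -/
def f12 (a : ℕ) (x : Fin (2 * a) → Bool) : ℕ :=
  ∑ i : Fin (2 * a),
    if ((i : ℕ) < a ∧ x i = true) ∨ (a ≤ (i : ℕ) ∧ x i = false) then 1 else 0

/-- Zeros in the first half plus ones in the second half. -/
def f21 (a : ℕ) (x : Fin (2 * a) → Bool) : ℕ :=
  ∑ i : Fin (2 * a),
    if ((i : ℕ) < a ∧ x i = false) ∨ (a ≤ (i : ℕ) ∧ x i = true) then 1 else 0

/-- Number of ones in the first half of `x` (indices `i < a`). -/
def f22 (a : ℕ) (x : Fin (2 * a) → Bool) : ℕ :=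
  ∑ i : Fin (2 * a), if (i : ℕ) < a ∧ x i = true then 1 else 0

def AORZ (a : ℕ) (x : Fin (2 * a) → Bool) : ℕ × ℕ := (f11 a x, f12 a x)

def AOFZ (a : ℕ) (x : Fin (2 * a) → Bool) : ℕ × ℕ := (f21 a x, f22 a x)

/-- `u` dominates `v` for bi-objective maximization. -/
def dominates (u v : ℕ × ℕ) : Prop := (v.1 ≤ u.1 ∧ v.2 ≤ u.2) ∧ u ≠ v

/-- Pareto set (maximization) of an objective `F` on bit strings of length `2a`. -/
def paretoSet (a : ℕ) (F : (Fin (2 * a) → Bool) → ℕ × ℕ) : Set (Fin (2 * a) → Bool) :=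
  {x | ¬ ∃ y : Fin (2 * a) → Bool, dominates (F y) (F x)}

lemma sum_range_lt (n a : ℕ) : ∑ i ∈ Finset.range n, (if i < a then 1 else 0) = min n a := by
  induction n with
  | zero => simp
  | succ n ih => rw [Finset.sum_range_succ, ih]; by_cases h : n < a <;> simp [h] <;> omega

lemma sum_ind_lt (a : ℕ) : ∑ i : Fin (2*a), (if (i:ℕ) < a then 1 else 0) = a := by
  rw [Fin.sum_univ_eq_sum_range (fun i => if i < a then 1 else 0), sum_range_lt]; omega

lemma sum_ind_ge (a : ℕ) : ∑ i : Fin (2*a), (if a ≤ (i:ℕ) then 1 else 0) = a := by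
  have h2 : (∑ i : Fin (2*a), (if a ≤ (i:ℕ) then 1 else 0)) +
      (∑ i : Fin (2*a), (if (i:ℕ) < a then 1 else 0)) = 2 * a := by
    rw [← Finset.sum_add_distrib]
    have : ∀ i : Fin (2*a), ((if a ≤ (i:ℕ) then 1 else 0) + if (i:ℕ) < a then 1 else 0) = 1 := by
      intro i; by_cases h : a ≤ (i:ℕ) <;> simp [h]
    simp [this]
  have := sum_ind_lt a; omega

lemma f11_le (a : ℕ) (x : Fin (2*a) → Bool) : f11 a x ≤ a :=
  le_trans (Finset.sum_le_sum (fun i _ => by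
    by_cases h : a ≤ (i:ℕ) ∧ x i = true <;> simp [h]))
    (le_of_eq (sum_ind_ge a))

lemma f22_le (a : ℕ) (x : Fin (2*a) → Bool) : f22 a x ≤ a :=
  le_trans (Finset.sum_le_sum (fun i _ => by
    by_cases h : (i:ℕ) < a ∧ x i = true <;> simp [h]))
    (le_of_eq (sum_ind_lt a))

lemma key1 (a : ℕ) (x : Fin (2*a) → Bool) : f11 a x + f12 a x = f22 a x + a :=
  calc f11 a x + f12 a x
      = ∑ i : Fin (2*a), ((if a ≤ (i:ℕ) ∧ x i = true then 1 else 0)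
        + if ((i:ℕ) < a ∧ x i = true) ∨ (a ≤ (i:ℕ) ∧ x i = false) then 1 else 0) :=
        Finset.sum_add_distrib.symm
    _ = ∑ i : Fin (2*a), ((if (i:ℕ) < a ∧ x i = true then 1 else 0)
        + if a ≤ (i:ℕ) then 1 else 0) := Finset.sum_congr rfl (fun i _ => by
          by_cases h : a ≤ (i:ℕ) <;> cases hx : x i <;> simp [h, hx] <;> omega)
    _ = f22 a x + ∑ i : Fin (2*a), (if a ≤ (i:ℕ) then 1 else 0) := Finset.sum_add_distrib
    _ = f22 a x + a := by rw [sum_ind_ge]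

lemma key2 (a : ℕ) (x : Fin (2*a) → Bool) : f22 a x + f21 a x = f11 a x + a :=
  calc f22 a x + f21 a x
      = ∑ i : Fin (2*a), ((if (i:ℕ) < a ∧ x i = true then 1 else 0)
        + if ((i:ℕ) < a ∧ x i = false) ∨ (a ≤ (i:ℕ) ∧ x i = true) then 1 else 0) :=
        Finset.sum_add_distrib.symm
    _ = ∑ i : Fin (2*a), ((if a ≤ (i:ℕ) ∧ x i = true then 1 else 0)
        + if (i:ℕ) < a then 1 else 0) := Finset.sum_congr rfl (fun i _ => by
          by_cases h : a ≤ (i:ℕ) <;> cases hx : x i <;> simp [h, hx] <;> omega)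
    _ = f11 a x + ∑ i : Fin (2*a), (if (i:ℕ) < a then 1 else 0) := Finset.sum_add_distrib
    _ = f11 a x + a := by rw [sum_ind_lt]

lemma f11_one (a : ℕ) : f11 a (fun _ => true) = a := by
  rw [f11]; simpa using sum_ind_ge a

lemma f12_one (a : ℕ) : f12 a (fun _ => true) = a := by
  rw [f12]; simpa using sum_ind_lt a

lemma f21_one (a : ℕ) : f21 a (fun _ => true) = a := by
  rw [f21]; simpa using sum_ind_ge a

lemma f22_one (a : ℕ) : f22 a (fun _ => true) = a := by
  rw [f22]; simpa using sum_ind_lt a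

lemma f22_eq (a : ℕ) (x : Fin (2*a) → Bool) (h : f22 a x = a) :
    ∀ i : Fin (2*a), (i:ℕ) < a → x i = true := by
  have hle : ∀ i : Fin (2*a), i ∈ Finset.univ → (if (i:ℕ) < a ∧ x i = true then 1 else 0) ≤
      (if (i:ℕ) < a then (1:ℕ) else 0) := fun i _ => by
    by_cases hh : (i:ℕ) < a ∧ x i = true <;> simp [hh]
  have heq : f22 a x = ∑ i : Fin (2*a), (if (i:ℕ) < a then 1 else 0) := by
    rw [h, sum_ind_lt]
  have := (Finset.sum_eq_sum_iff_of_le hle).1 heq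
  intro i hi
  have hi2 := this i (Finset.mem_univ i)
  by_contra hx
  simp [hi, hx] at hi2

lemma f11_eq (a : ℕ) (x : Fin (2*a) → Bool) (h : f11 a x = a) :
    ∀ i : Fin (2*a), a ≤ (i:ℕ) → x i = true := by
  have hle : ∀ i : Fin (2*a), i ∈ Finset.univ → (if a ≤ (i:ℕ) ∧ x i = true then 1 else 0) ≤
      (if a ≤ (i:ℕ) then (1:ℕ) else 0) := fun i _ => by
    by_cases hh : a ≤ (i:ℕ) ∧ x i = true <;> simp [hh]
  have heq : f11 a x = ∑ i : Fin (2*a), (if a ≤ (i:ℕ) then 1 else 0) := by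
    rw [h, sum_ind_ge]
  have := (Finset.sum_eq_sum_iff_of_le hle).1 heq
  intro i hi
  have hi2 := this i (Finset.mem_univ i)
  by_contra hx
  simp [hi, hx] at hi2

theorem bpaoaz_common_pareto_set (a : ℕ) (ha : 1 ≤ a) :
    paretoSet a (AORZ a) ∩ paretoSet a (AOFZ a)
      = {fun _ : Fin (2 * a) => true} ∧
    AORZ a (fun _ => true) = (a, a) ∧ AOFZ a (fun _ => true) = (a, a) := by
  refine ⟨?_, by simp [AORZ, f11_one, f12_one], by simp [AOFZ, f21_one, f22_one]⟩
  ext x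
  simp only [Set.mem_inter_iff, Set.mem_singleton_iff, paretoSet, Set.mem_setOf_eq]
  constructor
  · rintro ⟨h1, h2⟩
    -- first half all ones
    have hf22 : f22 a x = a := by
      by_contra hne
      have hlt : f22 a x < a := lt_of_le_of_ne (f22_le a x) hne
      set y : Fin (2*a) → Bool := fun j => if (j:ℕ) < a then true else x j with hy
      have h11 : f11 a y = f11 a x := Finset.sum_congr rfl (fun i _ => by
        by_cases h : a ≤ (i:ℕ)
        · simp [hy, Nat.not_lt.2 h, h]
        · simp [h])
      have h22 : f22 a y = a := by
        rw [show f22 a y = ∑ i : Fin (2*a), (if (i:ℕ) < a then 1 else 0) from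
          Finset.sum_congr rfl (fun i _ => by by_cases h : (i:ℕ) < a <;> simp [hy, h]),
          sum_ind_lt]
      have k1 := key1 a x
      have k2 := key1 a y
      refine h1 ⟨y, ⟨?_, ?_⟩, ?_⟩
      · show f11 a x ≤ f11 a y; omega
      · show f12 a x ≤ f12 a y; omega
      · simp only [AORZ, Prod.mk.injEq, ne_eq, not_and]; intro _; omega
    have hf11 : f11 a x = a := by
      by_contra hne
      have hlt : f11 a x < a := lt_of_le_of_ne (f11_le a x) hne
      set y : Fin (2*a) → Bool := fun j => if a ≤ (j:ℕ) then true else x j with hy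
      have h22 : f22 a y = f22 a x := Finset.sum_congr rfl (fun i _ => by
        by_cases h : (i:ℕ) < a
        · simp [hy, Nat.not_le.2 h, h]
        · simp [h])
      have h11 : f11 a y = a := by
        rw [show f11 a y = ∑ i : Fin (2*a), (if a ≤ (i:ℕ) then 1 else 0) from
          Finset.sum_congr rfl (fun i _ => by by_cases h : a ≤ (i:ℕ) <;> simp [hy, h]),
          sum_ind_ge]
      have k1 := key2 a x
      have k2 := key2 a y
      refine h2 ⟨y, ⟨?_, ?_⟩, ?_⟩
      · show f21 a x ≤ f21 a y; omega
      · show f22 a x ≤ f22 a y; omega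
      · simp only [AOFZ, Prod.mk.injEq, ne_eq, not_and]; intro _; omega
    funext i
    rcases lt_or_ge (i:ℕ) a with h | h
    · exact f22_eq a x hf22 i h
    · exact f11_eq a x hf11 i h
  · rintro rfl
    constructor
    · rintro ⟨y, ⟨hy1, hy2⟩, hne⟩
      simp only [AORZ, f11_one, f12_one] at hy1 hy2 hne
      have e1 : f11 a y = a := le_antisymm (f11_le a y) hy1
      have k := key1 a y
      have hb := f22_le a y
      have e2 : f12 a y = a := by omega
      exact hne (by simp [AORZ, e1, e2, f11_one, f12_one])
    · rintro ⟨y, ⟨hy1, hy2⟩, hne⟩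
      simp only [AOFZ, f21_one, f22_one] at hy1 hy2 hne
      have e2 : f22 a y = a := le_antisymm (f22_le a y) hy2
      have k := key2 a y
      have hb := f11_le a y
      have e1 : f21 a y = a := by omega
      exact hne (by simp [AOFZ, e1, e2, f21_one, f22_one])
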